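/- arXiv:cs/0512061 — 4 statements merged into one kernel-verified Lean document; each statement's English description precedes it below -/
import Mathlib

section
/- The state invariant of the Down procedure is an antichain: if X is an antichain in a rooted tree P (no element is a proper ancestor of another), then Down(X, y) := Child({x ∈ X : label(x) = label(y)}) ∪ {x ∈ X : label(x) ≠ label(y)} is also an antichain. -/
open Finset
open scoped Classical

/-- A rooted tree on `n` nodes given by a parent function. -/
structure RTree (n : ℕ) where
  parent : Fin n → Fin n
  root : Fin n
  parent_root : parent root = root
  wf : ∀ v, ∃ k, parent^[k] v = root

namespace RTree

variable {n : ℕ}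

/-- `x` is an ancestor of `v` (possibly `x = v`). -/
def Anc (T : RTree n) (x v : Fin n) : Prop := ∃ k, T.parent^[k] v = x

/-- `z` is a child of `y`. -/
def IsChild (T : RTree n) (z y : Fin n) : Prop := T.parent z = y ∧ z ≠ y

/-- The number of nodes in the subtree rooted at `y`. -/
noncomputable def size (T : RTree n) (y : Fin n) : ℕ :=
  (Finset.univ.filter fun v => T.Anc y v).card

/-- A leaf is a node with no children. -/
def IsLeaf (T : RTree n) (v : Fin n) : Prop := ∀ z, T.parent z = v → z = v

noncomputable def leaves (T : RTree n) : Finset (Fin n) :=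
  Finset.univ.filter fun v => T.IsLeaf v

noncomputable def depth (T : RTree n) (v : Fin n) : ℕ := Nat.find (T.wf v)

/-- The list of labels on the path from the root down to `v`. -/
noncomputable def pathLabels {α : Type*} (T : RTree n) (lab : Fin n → α) (v : Fin n) :
    List α :=
  (List.range (T.depth v + 1)).map fun i => lab (T.parent^[T.depth v - i] v)

/-- The number of light edges on the root-to-`y` path (`hv x = true` iff `x` is heavy). -/
noncomputable def lightdepth (T : RTree n) (hv : Fin n → Bool) (y : Fin n) : ℕ :=
  (Finset.univ.filter fun x => T.Anc x y ∧ x ≠ T.root ∧ hv x = false).card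

end RTree

/-- The `Down` procedure: children of matched nodes together with unmatched nodes. -/
def Down {m : ℕ} {α : Type*} (P : RTree m) (lab : Fin m → α) (X : Set (Fin m)) (a : α) :
    Set (Fin m) :=
  {z | ∃ x ∈ X, lab x = a ∧ P.IsChild z x} ∪ {x ∈ X | lab x ≠ a}

/-!
A node of `Down(X, y)` is either a node of `X` or a child of one. If `u` is an ancestor of `w`
in `Down(X, y)` and `u ≠ w`, then `u` is already an ancestor of the parent of `w`; climbing to
the nodes of `X` they come from, the antichain property of `X` forces these to coincide. The
labels then exclude the mixed cases, and in the case of two children the common parent would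
be both a proper ancestor and a descendant of `u`, which acyclicity of the parent map forbids.
-/

namespace RTree

variable {n : ℕ} (T : RTree n)

theorem anc_trans {x y z : Fin n} (hxy : T.Anc x y) (hyz : T.Anc y z) : T.Anc x z := by
  obtain ⟨k, hk⟩ := hxy
  obtain ⟨l, hl⟩ := hyz
  exact ⟨k + l, by rw [Function.iterate_add_apply, hl, hk]⟩

theorem eq_root_of_iterate_eq_self {x : Fin n} {p : ℕ} (hp : 0 < p)
    (hx : T.parent^[p] x = x) : x = T.root := by
  obtain ⟨N, hN⟩ := T.wf x
  have hperiodic : T.parent^[p * N] x = x := Function.IsPeriodicPt.mul_const hx N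
  rw [← hperiodic, show p * N = (p * N - N) + N from
      (Nat.sub_add_cancel (Nat.le_mul_of_pos_left N hp)).symm,
    Function.iterate_add_apply, hN, Function.iterate_fixed T.parent_root]

theorem anc_antisymm {x y : Fin n} (hxy : T.Anc x y) (hyx : T.Anc y x) : x = y := by
  obtain ⟨k, hk⟩ := hxy
  obtain ⟨l, hl⟩ := hyx
  have hcycle : T.parent^[k + l] x = x := by rw [Function.iterate_add_apply, hl, hk]
  rcases Nat.eq_zero_or_pos (k + l) with hzero | hpos
  · obtain rfl : k = 0 := by omega
    exact hk.symm
  · have hroot := T.eq_root_of_iterate_eq_self hpos hcycle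
    rw [← hl, hroot, Function.iterate_fixed T.parent_root]

theorem eq_or_anc_parent_of_anc {x z : Fin n} (h : T.Anc x z) :
    x = z ∨ T.Anc x (T.parent z) := by
  obtain ⟨_ | k, hk⟩ := h
  · exact Or.inl hk.symm
  · exact Or.inr ⟨k, hk⟩

variable {T}

theorem IsChild.anc {z y : Fin n} (h : T.IsChild z y) : T.Anc y z := ⟨1, h.1⟩

end RTree

/-- The `Down` procedure preserves antichains: if no node of `X` is a proper ancestor of
another node of `X`, the same holds for `Down(X, y)`. -/
theorem down_antichain (m : ℕ) {α : Type*} (P : RTree m) (lab : Fin m → α)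
    (X : Set (Fin m)) (a : α)
    (hX : ∀ x ∈ X, ∀ z ∈ X, P.Anc x z → x = z) :
    ∀ x ∈ Down P lab X a, ∀ z ∈ Down P lab X a, P.Anc x z → x = z := by
  rintro x (⟨x', hx', hlx', hxc⟩ | ⟨hx, hlx⟩) z (⟨z', hz', hlz', hzc⟩ | ⟨hz, hlz⟩) hxz
  · rcases P.eq_or_anc_parent_of_anc hxz with rfl | hxz'
    · rfl
    rw [hzc.1] at hxz'
    obtain rfl : x' = z' := hX _ hx' _ hz' (P.anc_trans hxc.anc hxz')
    exact absurd (P.anc_antisymm hxz' hxc.anc) hxc.2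
  · obtain rfl : x' = z := hX _ hx' _ hz (P.anc_trans hxc.anc hxz)
    exact absurd hlx' hlz
  · rcases P.eq_or_anc_parent_of_anc hxz with rfl | hxz'
    · rfl
    rw [hzc.1] at hxz'
    obtain rfl : x = z' := hX _ hx _ hz' hxz'
    exact absurd hlz' hlx
  · exact hX _ hx _ hz hxz
end

section
/- Soundness of the Down-based traversal: let T be a rooted labeled tree and define states along root-to-node paths by X_{root(T)} = Down({root(P)}, root(T)) and X_z = Down(X_y, z) for each child z of y. Then for every node y of T and every x ∈ X_y, the label sequence of the root-to-parent(x) path in P is a subsequence of the label sequence of the root-to-y path in T. -/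
/-! Induction down `T`. If every `x ∈ X` satisfies `path(parent x) ⊑ L`, then every
`z ∈ Down(X, a)` satisfies `path(parent z) ⊑ L ++ [a]`: a matched `x` (label `a`) is replaced by
its children `z`, and `path(parent z) = path(x) = path(parent x) ++ [a]`; an unmatched `x` stays
and `L ⊑ L ++ [a]`. Since `path(y) = path(parent y) ++ [label y]`, the invariant propagates from
`{root(P)}` (where it holds with `L = []`) to every state. -/

open Finset
open scoped Classical

namespace RTree

variable {n : ℕ} {α : Type*}

theorem induction_on (T : RTree n) {motive : Fin n → Prop} (root : motive T.root)
    (step : ∀ v, v ≠ T.root → motive (T.parent v) → motive v) (v : Fin n) : motive v := by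
  obtain ⟨k, hk⟩ := T.wf v
  induction k generalizing v with
  | zero =>
    rw [Function.iterate_zero_apply] at hk
    exact hk ▸ root
  | succ k ih =>
    by_cases hv : v = T.root
    · exact hv ▸ root
    · exact step v hv (ih _ hk)

theorem depth_root (T : RTree n) : T.depth T.root = 0 :=
  (Nat.find_eq_zero _).2 rfl

theorem depth_of_ne_root (T : RTree n) {v : Fin n} (hv : v ≠ T.root) :
    T.depth v = T.depth (T.parent v) + 1 :=
  Nat.find_comp_succ (T.wf v) (T.wf (T.parent v)) hv

theorem pathLabels_root (T : RTree n) (lab : Fin n → α) :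
    T.pathLabels lab T.root = [lab T.root] := by
  simp [pathLabels, depth_root]

theorem pathLabels_of_ne_root (T : RTree n) (lab : Fin n → α) {v : Fin n} (hv : v ≠ T.root) :
    T.pathLabels lab v = T.pathLabels lab (T.parent v) ++ [lab v] := by
  rw [pathLabels, pathLabels, T.depth_of_ne_root hv, List.range_succ, List.map_append]
  congr 1
  refine List.map_congr_left fun i hi => ?_
  rw [Nat.sub_add_comm (Nat.le_of_lt_succ (List.mem_range.1 hi)), Function.iterate_succ_apply]
  simp

noncomputable def parentPathLabels (T : RTree n) (lab : Fin n → α) (x : Fin n) : List α :=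
  if x = T.root then [] else T.pathLabels lab (T.parent x)

theorem parentPathLabels_root (T : RTree n) (lab : Fin n → α) :
    T.parentPathLabels lab T.root = [] :=
  if_pos rfl

theorem parentPathLabels_append (T : RTree n) (lab : Fin n → α) (x : Fin n) :
    T.parentPathLabels lab x ++ [lab x] = T.pathLabels lab x := by
  by_cases hx : x = T.root
  · subst hx
    rw [parentPathLabels_root, pathLabels_root, List.nil_append]
  · rw [parentPathLabels, if_neg hx, T.pathLabels_of_ne_root lab hx]

theorem parentPathLabels_of_isChild (T : RTree n) (lab : Fin n → α) {z x : Fin n}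
    (h : T.IsChild z x) : T.parentPathLabels lab z = T.pathLabels lab x := by
  have hz : z ≠ T.root := fun hz => h.2 (by rw [← h.1, hz, T.parent_root])
  rw [parentPathLabels, if_neg hz, h.1]

end RTree

theorem parentPathLabels_sublist_of_mem_down {m : ℕ} {α : Type*} {P : RTree m}
    {lab : Fin m → α} {X : Set (Fin m)} {L : List α}
    (hX : ∀ x ∈ X, (P.parentPathLabels lab x).Sublist L) {a : α} {z : Fin m}
    (hz : z ∈ Down P lab X a) : (P.parentPathLabels lab z).Sublist (L ++ [a]) := by
  rcases hz with ⟨x, hx, rfl, hzx⟩ | ⟨hz, -⟩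
  · rw [P.parentPathLabels_of_isChild lab hzx, ← P.parentPathLabels_append]
    exact (hX x hx).append_right _
  · exact (hX z hz).trans (List.sublist_append_left _ _)

/-- Soundness of the `Down`-based traversal (Lemma 1): if the states along `T` are
computed by `Down` starting from `{root(P)}`, then every `x` in the state at `y`
satisfies `path(parent(x)) ⊑ path(y)` (with the empty path for `x = root(P)`). -/
theorem down_traversal_sound (m n : ℕ) {α : Type*} (P : RTree m) (T : RTree n)
    (lp : Fin m → α) (lt : Fin n → α) (X : Fin n → Set (Fin m))
    (hroot : X T.root = Down P lp {P.root} (lt T.root))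
    (hstep : ∀ z, z ≠ T.root → X z = Down P lp (X (T.parent z)) (lt z))
    (y : Fin n) (x : Fin m) (hx : x ∈ X y) :
    (if x = P.root then ([] : List α) else P.pathLabels lp (P.parent x)).Sublist
      (T.pathLabels lt y) := by
  refine T.induction_on (motive := fun y => ∀ x ∈ X y,
    (P.parentPathLabels lp x).Sublist (T.pathLabels lt y)) ?_ ?_ y x hx
  · intro x hx
    rw [hroot] at hx
    rw [T.pathLabels_root, ← List.nil_append [lt T.root]]
    refine parentPathLabels_sublist_of_mem_down ?_ hx
    rintro _ rfl
    rw [P.parentPathLabels_root]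
  · intro z hz ih x hx
    rw [hstep z hz] at hx
    rw [T.pathLabels_of_ne_root lt hz]
    exact parentPathLabels_sublist_of_mem_down ih hx
end

section
/- Single-path monotone insertion: if T is a path (every node of T has at most one child) and states are computed along T by repeated application of Down starting from {root(P)}, then each node x of P enters the state at most once; that is, for each x there do not exist two nodes y₁ ≠ y₂ on the path with x ∉ X_{parent(y₁)}, x ∈ X_{y₁}, x ∉ X_{parent(y₂)}, x ∈ X_{y₂}. -/
open Finset
open scoped Classical

/-!
Along a root path of `T` the states form a sequence `S₀ = {root P}`, `Sₖ₊₁ = Down Sₖ aₖ`.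
Every state is an antichain of `P`, so a node `x` enters at step `k + 1` only when its
parent leaves at that step: the parent was matched in `Sₖ`, and a matched node cannot
survive, since it could only come back as the child of a strict ancestor lying in the
same antichain. By induction on the depth of `x` in `P`, the times at which `x` is present
form an interval: a gap in the presence of `x` would require two entries of `x` (a node
that enters is not the root, so it is absent from `S₀`), hence two exits of its parent,
i.e. a gap in the presence of the parent. In a path all nodes lie on one root path, so `x`
enters at most once.
-/

theorem Nat.exists_not_and_succ_of_le {p : ℕ → Prop} {i j : ℕ} (hij : i ≤ j) (hi : ¬p i)
    (hj : p j) : ∃ e, i ≤ e ∧ e < j ∧ ¬p e ∧ p (e + 1) := by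
  induction j, hij using Nat.le_induction with
  | base => exact absurd hj hi
  | succ j hij ih =>
    by_cases hpj : p j
    · obtain ⟨e, hie, hej, he, he'⟩ := ih hpj
      exact ⟨e, hie, by omega, he, he'⟩
    · exact ⟨j, hij, j.lt_succ_self, hpj, hj⟩

namespace RTree

variable {n : ℕ} (T : RTree n)

theorem parent_induction {motive : Fin n → Prop}
    (ih : ∀ x, (x ≠ T.root → motive (T.parent x)) → motive x) (x : Fin n) : motive x := by
  obtain ⟨k, hk⟩ := T.wf x
  induction k generalizing x with
  | zero => exact ih x fun hx => absurd hk hx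
  | succ k hk' => exact ih x fun _ => hk' _ (by rwa [← Function.iterate_succ_apply])

theorem root_anc (v : Fin n) : T.Anc T.root v := T.wf v

theorem anc_parent (v : Fin n) : T.Anc (T.parent v) v := ⟨1, rfl⟩

theorem iterate_parent_eq_root {v : Fin n} {k l : ℕ} (h : T.parent^[k] v = T.root)
    (hkl : k ≤ l) : T.parent^[l] v = T.root := by
  obtain ⟨d, rfl⟩ := Nat.exists_eq_add_of_le hkl
  rw [add_comm, Function.iterate_add_apply, h, Function.iterate_fixed T.parent_root]

theorem iterate_parent_depth (v : Fin n) : T.parent^[T.depth v] v = T.root :=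
  Nat.find_spec (T.wf v)

theorem iterate_parent_ne_root {v : Fin n} {k : ℕ} (hk : k < T.depth v) :
    T.parent^[k] v ≠ T.root :=
  Nat.find_min (T.wf v) hk

theorem eq_root_of_isPeriodicPt {v : Fin n} {c : ℕ} (hv : Function.IsPeriodicPt T.parent c v)
    (hc : 0 < c) : v = T.root := by
  obtain ⟨k, hk⟩ := T.wf v
  rw [← (hv.mul_const k).eq]
  exact T.iterate_parent_eq_root hk (Nat.le_mul_of_pos_left k hc)

theorem eq_root_of_parent_eq_self {v : Fin n} (hv : T.parent v = v) : v = T.root :=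
  T.eq_root_of_isPeriodicPt (c := 1) hv one_pos

variable {T}

theorem Anc.trans {a b c : Fin n} (hab : T.Anc a b) (hbc : T.Anc b c) : T.Anc a c := by
  obtain ⟨i, rfl⟩ := hab
  obtain ⟨j, rfl⟩ := hbc
  exact ⟨i + j, Function.iterate_add_apply _ _ _ _⟩

theorem Anc.antisymm {a b : Fin n} (hab : T.Anc a b) (hba : T.Anc b a) : a = b := by
  obtain ⟨i, rfl⟩ := hab
  obtain ⟨j, hj⟩ := hba
  rcases Nat.eq_zero_or_pos i with rfl | hi
  · rfl
  have hb : Function.IsPeriodicPt T.parent (j + i) b := by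
    rw [Function.IsPeriodicPt, Function.IsFixedPt, Function.iterate_add_apply, hj]
  rw [T.eq_root_of_isPeriodicPt hb (by omega), Function.iterate_fixed T.parent_root]

theorem Anc.total_of_anc {a b c : Fin n} (hac : T.Anc a c) (hbc : T.Anc b c) :
    T.Anc a b ∨ T.Anc b a := by
  obtain ⟨i, rfl⟩ := hac
  obtain ⟨j, rfl⟩ := hbc
  rcases le_total i j with h | h
  · obtain ⟨d, rfl⟩ := Nat.exists_eq_add_of_le h
    exact Or.inr ⟨d, by rw [add_comm, Function.iterate_add_apply]⟩
  · obtain ⟨d, rfl⟩ := Nat.exists_eq_add_of_le h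
    exact Or.inl ⟨d, by rw [add_comm, Function.iterate_add_apply]⟩

theorem Anc.anc_parent_of_ne {a b : Fin n} (hab : T.Anc a b) (hne : a ≠ b) :
    T.Anc a (T.parent b) := by
  obtain ⟨_ | k, rfl⟩ := hab
  · exact absurd rfl hne
  · exact ⟨k, (Function.iterate_succ_apply _ _ _).symm⟩

theorem Anc.exists_iterate_eq_of_le_depth {a b : Fin n} (hab : T.Anc a b) :
    ∃ j ≤ T.depth b, T.parent^[j] b = a := by
  obtain ⟨j, rfl⟩ := hab
  by_cases hj : j ≤ T.depth b
  · exact ⟨j, hj, rfl⟩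
  · refine ⟨T.depth b, le_rfl, ?_⟩
    rw [T.iterate_parent_depth, T.iterate_parent_eq_root (T.iterate_parent_depth b) (by omega)]

variable (hpath : ∀ y z1 z2, T.IsChild z1 y → T.IsChild z2 y → z1 = z2)
include hpath

theorem anc_or_anc_of_parent_anc {y z : Fin n} (h : T.Anc (T.parent z) y) :
    T.Anc z y ∨ T.Anc y z := by
  obtain ⟨l, hl⟩ := h
  induction l with
  | zero => exact Or.inr ⟨1, hl.symm⟩
  | succ l ih =>
    rw [Function.iterate_succ_apply'] at hl
    set w := T.parent^[l] y
    by_cases hw : T.parent w = w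
    · exact ih (hw.symm.trans hl)
    by_cases hz : T.parent z = z
    · exact Or.inl (T.eq_root_of_parent_eq_self hz ▸ T.root_anc y)
    · exact Or.inl ⟨l, hpath _ w z ⟨hl, fun h => hw (hl.trans h.symm)⟩ ⟨rfl, fun h => hz h.symm⟩⟩

theorem anc_total (y z : Fin n) : T.Anc y z ∨ T.Anc z y := by
  induction z using T.parent_induction generalizing y with
  | ih z hz =>
    by_cases hroot : z = T.root
    · exact Or.inr (hroot ▸ T.root_anc y)
    rcases hz hroot y with h | h
    · exact Or.inl (h.trans (T.anc_parent z))
    · exact (anc_or_anc_of_parent_anc hpath h).symm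

end RTree

section Down

variable {m : ℕ} {α : Type*} {P : RTree m} {lp : Fin m → α}

theorem IsAntichain.down {S : Set (Fin m)} (hS : IsAntichain P.Anc S) (a : α) :
    IsAntichain P.Anc (Down P lp S a) := by
  intro u hu v hv hne huv
  rcases hu with ⟨q, hq, hqa, hu⟩ | ⟨hu, hua⟩ <;> rcases hv with ⟨r, hr, hra, hv⟩ | ⟨hv, hva⟩
  · have hqr : q = r := by
      have hqv : P.Anc q v := (hu.1 ▸ P.anc_parent u).trans huv
      rcases hqv.total_of_anc (hv.1 ▸ P.anc_parent v) with h | h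
      · exact hS.eq hq hr h
      · exact (hS.eq hr hq h).symm
    subst hqr
    have huq : P.Anc u q := hv.1 ▸ huv.anc_parent_of_ne hne
    exact hu.2 (huq.antisymm (hu.1 ▸ P.anc_parent u))
  · have hqv : P.Anc q v := (hu.1 ▸ P.anc_parent u).trans huv
    exact hva (hS.eq hq hv hqv ▸ hqa)
  · have hur : u = r := by
      rcases huv.total_of_anc (hv.1 ▸ P.anc_parent v) with h | h
      · exact hS.eq hu hr h
      · exact (hS.eq hr hu h).symm
    exact hua (hur ▸ hra)
  · exact hS hu hv hne huv

theorem parent_mem_of_notMem_of_mem_down {S : Set (Fin m)} {a : α} {x : Fin m} (hx : x ∉ S)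
    (hx' : x ∈ Down P lp S a) : P.parent x ∈ S ∧ lp (P.parent x) = a ∧ P.parent x ≠ x := by
  rcases hx' with ⟨q, hq, hqa, hxq, hne⟩ | ⟨hxS, -⟩
  · subst hxq
    exact ⟨hq, hqa, Ne.symm hne⟩
  · exact absurd hxS hx

theorem notMem_down_of_label_eq {S : Set (Fin m)} (hS : IsAntichain P.Anc S) {p : Fin m}
    (hp : p ∈ S) : p ∉ Down P lp S (lp p) := by
  rintro (⟨q, hq, -, hpq, hne⟩ | ⟨-, hlab⟩)
  · exact hS hq hp (Ne.symm hne) (hpq ▸ P.anc_parent p)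
  · exact hlab rfl

end Down

section DownSeq

variable {m : ℕ} {α : Type*} (P : RTree m) (lp : Fin m → α) (a : ℕ → α)

def downSeq : ℕ → Set (Fin m)
  | 0 => {P.root}
  | k + 1 => Down P lp (downSeq k) (a k)

theorem isAntichain_downSeq (k : ℕ) : IsAntichain P.Anc (downSeq P lp a k) := by
  induction k with
  | zero => exact IsAntichain.singleton
  | succ k ih => exact ih.down (a k)

variable {P lp a}

theorem parent_exits_of_enters {x : Fin m} {k : ℕ} (hx : x ∉ downSeq P lp a k)
    (hx' : x ∈ downSeq P lp a (k + 1)) :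
    x ≠ P.root ∧ P.parent x ∈ downSeq P lp a k ∧ P.parent x ∉ downSeq P lp a (k + 1) := by
  obtain ⟨hp, hpa, hne⟩ := parent_mem_of_notMem_of_mem_down hx hx'
  refine ⟨fun h => hne (h ▸ P.parent_root), hp, ?_⟩
  rw [downSeq, ← hpa]
  exact notMem_down_of_label_eq (isAntichain_downSeq P lp a k) hp

variable (P lp a)

theorem ordConnected_setOf_mem_downSeq (x : Fin m) :
    {k | x ∈ downSeq P lp a k}.OrdConnected := by
  induction x using P.parent_induction with
  | ih x hparent =>
    refine ⟨fun i hi j hj k ⟨hik, hkj⟩ => by_contra fun hxk => ?_⟩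
    obtain ⟨e, hke, -, he, he'⟩ := Nat.exists_not_and_succ_of_le hkj hxk hj
    obtain ⟨hx, hpe, -⟩ := parent_exits_of_enters he he'
    have hx₀ : x ∉ downSeq P lp a 0 := hx
    obtain ⟨e₀, -, he₀i, he₀, he₀'⟩ := Nat.exists_not_and_succ_of_le (Nat.zero_le i) hx₀ hi
    obtain ⟨-, hpe₀, hpe₀'⟩ := parent_exits_of_enters he₀ he₀'
    exact hpe₀' ((hparent hx).out hpe₀ hpe (show e₀ + 1 ∈ Set.Icc e₀ e from ⟨by omega, by omega⟩))

variable {P lp a}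

theorem eq_of_enters {x : Fin m} {i j : ℕ} (hi : x ∉ downSeq P lp a i)
    (hi' : x ∈ downSeq P lp a (i + 1)) (hj : x ∉ downSeq P lp a j)
    (hj' : x ∈ downSeq P lp a (j + 1)) : i = j := by
  have hx := ordConnected_setOf_mem_downSeq P lp a x
  rcases lt_trichotomy i j with h | h | h
  · exact absurd (hx.out hi' hj' ⟨h, j.le_succ⟩) hj
  · exact h
  · exact absurd (hx.out hj' hi' ⟨h, i.le_succ⟩) hi

end DownSeq

section Path

variable {m n : ℕ} {α : Type*} (P : RTree m) (T : RTree n) (lp : Fin m → α) (lt : Fin n → α)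
  (X : Fin n → Set (Fin m))

def stateBefore (y : Fin n) : Set (Fin m) :=
  if y = T.root then {P.root} else X (T.parent y)

variable (hroot : X T.root = Down P lp {P.root} (lt T.root))
  (hstep : ∀ z, z ≠ T.root → X z = Down P lp (X (T.parent z)) (lt z))
include hroot hstep

theorem eq_down_stateBefore (y : Fin n) : X y = Down P lp (stateBefore P T X y) (lt y) := by
  unfold stateBefore
  split_ifs with hy
  · exact hy ▸ hroot
  · exact hstep y hy

theorem stateBefore_iterate_eq_downSeq (v : Fin n) {k : ℕ} (hk : k ≤ T.depth v) :
    stateBefore P T X (T.parent^[T.depth v - k] v) =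
      downSeq P lp (fun i => lt (T.parent^[T.depth v - i] v)) k := by
  induction k with
  | zero => simp [stateBefore, downSeq, T.iterate_parent_depth]
  | succ k ih =>
    have hne := T.iterate_parent_ne_root (v := v) (k := T.depth v - (k + 1)) (by omega)
    have hpar : T.parent (T.parent^[T.depth v - (k + 1)] v) = T.parent^[T.depth v - k] v := by
      rw [← Function.iterate_succ_apply' T.parent]
      congr 1
      omega
    rw [stateBefore, if_neg hne, hpar, eq_down_stateBefore P T lp lt X hroot hstep,
      ih (by omega), downSeq]

theorem enters_iterate_iff (v : Fin n) {x : Fin m} {k : ℕ} (hk : k ≤ T.depth v) :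
    (x ∈ X (T.parent^[T.depth v - k] v) ∧ x ∉ stateBefore P T X (T.parent^[T.depth v - k] v)) ↔
      (x ∉ downSeq P lp (fun i => lt (T.parent^[T.depth v - i] v)) k ∧
        x ∈ downSeq P lp (fun i => lt (T.parent^[T.depth v - i] v)) (k + 1)) := by
  rw [eq_down_stateBefore P T lp lt X hroot hstep,
    stateBefore_iterate_eq_downSeq P T lp lt X hroot hstep v hk, downSeq, and_comm]

theorem eq_of_anc_of_enters {x : Fin m} {y₁ y₂ : Fin n} (hanc : T.Anc y₁ y₂)
    (h₁ : x ∈ X y₁ ∧ x ∉ stateBefore P T X y₁) (h₂ : x ∈ X y₂ ∧ x ∉ stateBefore P T X y₂) :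
    y₁ = y₂ := by
  obtain ⟨j, hj, rfl⟩ := hanc.exists_iterate_eq_of_le_depth
  rw [← Nat.sub_sub_self hj, enters_iterate_iff P T lp lt X hroot hstep y₂ (Nat.sub_le _ _)] at h₁
  rw [← Function.iterate_zero_apply T.parent y₂, ← Nat.sub_self (T.depth y₂),
    enters_iterate_iff P T lp lt X hroot hstep y₂ le_rfl] at h₂
  have := eq_of_enters h₁.1 h₁.2 h₂.1 h₂.2
  obtain rfl : j = 0 := by omega
  rfl

end Path

/-- Single-path monotone insertion (Lemma 6): if `T` is a path then every node `x` of `P`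
enters the state at most once, i.e. there are no two distinct nodes of `T` at which `x`
is in the state but not in the previous state. -/
theorem single_path_insert_once (m n : ℕ) {α : Type*} (P : RTree m) (T : RTree n)
    (lp : Fin m → α) (lt : Fin n → α) (X : Fin n → Set (Fin m))
    (hpath : ∀ y z1 z2, T.IsChild z1 y → T.IsChild z2 y → z1 = z2)
    (hroot : X T.root = Down P lp {P.root} (lt T.root))
    (hstep : ∀ z, z ≠ T.root → X z = Down P lp (X (T.parent z)) (lt z))
    (x : Fin m) (y1 y2 : Fin n)
    (h1 : x ∈ X y1 ∧
      x ∉ (if y1 = T.root then ({P.root} : Set (Fin m)) else X (T.parent y1)))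
    (h2 : x ∈ X y2 ∧
      x ∉ (if y2 = T.root then ({P.root} : Set (Fin m)) else X (T.parent y2))) :
    y1 = y2 := by
  rcases RTree.anc_total hpath y1 y2 with h | h
  · exact eq_of_anc_of_enters P T lp lt X hroot hstep h h1 h2
  · exact (eq_of_anc_of_enters P T lp lt X hroot hstep h h2 h1).symm
end

section
/- Up inverts Down: for the node-dictionary representation, if X is an antichain state in P and y is a node, then applying the Up procedure to Down(X, y) (with respect to y) recovers X; concretely, defining D = Child({x ∈ X : label(x) = label(y)}) ∪ {x ∈ X : label(x) ≠ label(y)} together with the removed set R = {x ∈ X : label(x) = label(y)}, one has (D \ Child(R)) ∪ R = X. -/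
open Finset
open scoped Classical

theorem RTree.Anc.of_isChild {n : ℕ} {T : RTree n} {z x : Fin n} (h : T.IsChild z x) :
    T.Anc x z :=
  ⟨1, h.1⟩

theorem RTree.isChild_notMem_of_antichain {n : ℕ} {T : RTree n} {X : Set (Fin n)}
    (hX : ∀ x ∈ X, ∀ z ∈ X, T.Anc x z → x = z) {x z : Fin n} (hx : x ∈ X)
    (hzx : T.IsChild z x) : z ∉ X := fun hz =>
  hzx.2 (hX x hx z hz (.of_isChild hzx)).symm

theorem RTree.disjoint_children_of_antichain {n : ℕ} {T : RTree n} {X S : Set (Fin n)}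
    (hX : ∀ x ∈ X, ∀ z ∈ X, T.Anc x z → x = z) (hS : S ⊆ X) :
    Disjoint X {z | ∃ x ∈ S, T.IsChild z x} :=
  Set.disjoint_left.mpr fun _ hz ⟨_, hxS, hzx⟩ =>
    isChild_notMem_of_antichain hX (hS hxS) hzx hz

/-- `Up` inverts `Down` (Lemma 4): for an antichain `X`, with `R` the matched nodes and
`D = Child(R) ∪ (X \ R)` the new state, removing `Child(R)` from `D` and re-inserting `R`
recovers `X`. -/
theorem up_inverts_down (m : ℕ) {α : Type*} (P : RTree m) (lab : Fin m → α)
    (X : Set (Fin m)) (a : α)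
    (hX : ∀ x ∈ X, ∀ z ∈ X, P.Anc x z → x = z) :
    (((({z | ∃ x ∈ {x ∈ X | lab x = a}, P.IsChild z x} ∪ (X \ {x ∈ X | lab x = a}))
        \ {z | ∃ x ∈ {x ∈ X | lab x = a}, P.IsChild z x})
      ∪ {x ∈ X | lab x = a}) : Set (Fin m)) = X := by
  have hR : {x ∈ X | lab x = a} ⊆ X := Set.sep_subset X _
  have hdisj := (P.disjoint_children_of_antichain hX hR).mono_left
    (Set.sdiff_subset (t := {x ∈ X | lab x = a}))
  rw [Set.union_sdiff_left, hdisj.sdiff_eq_left, Set.sdiff_union_of_subset hR]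
end
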